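/- In the Solomon simultaneous-report mechanism with proposer b (the non-mother) in state α, the responder a's unique optimal first-stage report is α, provided a's utility satisfies u_a(C) - F > u_a(B), i.e., a prefers outcome C with the fine to outcome B without it. -/

import Mathlib

/-!
Matching `a`'s report `β` gives `b` the outcome `B`, which `b` strictly prefers to `C`, so `b` matches
it and reporting `β` earns `a` exactly `u_a(B)`. Reporting `α` earns `a` either `u_a(A)` (agreement,
or a matching challenge) or `u_a(C) - F` (a mismatching challenge), and both exceed `u_a(B)`.
-/

inductive SolOutcome | A | B | C
deriving DecidableEq

inductive SolMsg | α | β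
deriving DecidableEq

open SolOutcome SolMsg

def outcomeOf : SolMsg → SolOutcome
  | SolMsg.α => SolOutcome.A
  | SolMsg.β => SolOutcome.B

namespace Solomon

def challengePayoff (uB : SolOutcome → ℝ) (F : ℝ) (r m : SolMsg) : ℝ :=
  if m = r then uB (outcomeOf r) - F else uB C - F

def responderPayoff (uA : SolOutcome → ℝ) (F : ℝ) (chal : SolMsg → SolMsg) (Mp Mr : SolMsg) : ℝ :=
  if Mr = Mp then uA (outcomeOf Mr) else if chal Mr = Mr then uA (outcomeOf Mr) else uA C - F

theorem eq_of_challengePayoff_le {uB : SolOutcome → ℝ} {F : ℝ} {r c : SolMsg}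
    (hbest : ∀ m, challengePayoff uB F r m ≤ challengePayoff uB F r c)
    (hlt : uB C < uB (outcomeOf r)) : c = r := by
  by_contra hne
  have := hbest r
  simp only [challengePayoff, if_neg hne, if_true] at this
  linarith

theorem responderPayoff_of_chal_eq {uA : SolOutcome → ℝ} {F : ℝ} {chal : SolMsg → SolMsg}
    {Mr : SolMsg} (hMr : chal Mr = Mr) (Mp : SolMsg) :
    responderPayoff uA F chal Mp Mr = uA (outcomeOf Mr) := by
  simp only [responderPayoff, hMr, if_true, ite_self]

theorem lt_responderPayoff {uA : SolOutcome → ℝ} {F x : ℝ} {chal : SolMsg → SolMsg}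
    {Mp Mr : SolMsg} (hout : x < uA (outcomeOf Mr)) (hfine : x < uA C - F) :
    x < responderPayoff uA F chal Mp Mr := by
  unfold responderPayoff
  split_ifs <;> assumption

end Solomon

open Solomon in
theorem solomon_responder_reports_truth_general
    (uA uB : SolOutcome → ℝ) (F : ℝ)
    (hAC : uA C < uA A) (hCB : uA B < uA C)
    (hbB : uB A < uB B) (hbAC : uB A = uB C)
    (hCFB : uA B < uA C - F)
    -- b's challenge strategy: the message b sends after observing a's report `r`
    (bChal : SolMsg → SolMsg)
    -- b's challenge message is a best response for b in every challenge subgame: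
    -- matching r implements outcomeOf r, mismatching implements C; b keeps the fine F.
    (hbBR : ∀ r m : SolMsg,
      (if m = r then uB (outcomeOf r) - F else uB C - F) ≤
        (if bChal r = r then uB (outcomeOf r) - F else uB C - F))
    -- a's payoff as responder, as a function of b's first-stage report Mp and a's report Mr
    (payA : SolMsg → SolMsg → ℝ)
    (hpayA : ∀ Mp Mr : SolMsg,
      payA Mp Mr =
        if Mr = Mp then uA (outcomeOf Mr)
        else if bChal Mr = Mr then uA (outcomeOf Mr) else uA C - F) :
    ∀ Mp : SolMsg, (∀ Mr : SolMsg, Mr ≠ SolMsg.α → payA Mp Mr < payA Mp SolMsg.α) ∧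
      (∀ Mr : SolMsg, payA Mp Mr ≤ payA Mp SolMsg.α) := by
  have hpay : payA = responderPayoff uA F bChal := funext₂ hpayA
  have hmatch : bChal β = β := eq_of_challengePayoff_le (hbBR β) (hbAC ▸ hbB)
  intro Mp
  have hlie : payA Mp β < payA Mp α := by
    rw [hpay, responderPayoff_of_chal_eq hmatch]
    exact lt_responderPayoff (hCB.trans hAC) hCFB
  refine ⟨fun Mr hMr => ?_, fun Mr => ?_⟩
  · cases Mr
    · exact absurd rfl hMr
    · exact hlie
  · cases Mr
    · exact le_rfl
    · exact hlie.le

/-- state α, proposer is `b` (the non-mother), responder is `a` (the true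
mother).  If reports agree the agreed outcome is implemented with no fines; if they
disagree both pay `F` and `b` sends a challenge message (chosen as a best response for
`b`): matching `a`'s report implements it and refunds `a`'s fine, mismatching gives `C`
with `a`'s fine kept.  Provided `uA C - F > uA B`, the responder `a`'s unique optimal
first-stage report is α, whatever `b`'s first-stage report is. -/
theorem solomon_responder_reports_truth
    (uA uB : SolOutcome → ℝ) (F : ℝ) (hF : 0 < F)
    (hAC : uA C < uA A) (hCB : uA B < uA C)
    (hbB : uB A < uB B) (hbAC : uB A = uB C)
    (hCFB : uA B < uA C - F)
    -- b's challenge strategy: the message b sends after observing a's report `r`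
    (bChal : SolMsg → SolMsg)
    -- b's challenge message is a best response for b in every challenge subgame:
    -- matching r implements outcomeOf r, mismatching implements C; b keeps the fine F.
    (hbBR : ∀ r m : SolMsg,
      (if m = r then uB (outcomeOf r) - F else uB C - F) ≤
        (if bChal r = r then uB (outcomeOf r) - F else uB C - F))
    -- a's payoff as responder, as a function of b's first-stage report Mp and a's report Mr
    (payA : SolMsg → SolMsg → ℝ)
    (hpayA : ∀ Mp Mr : SolMsg,
      payA Mp Mr =
        if Mr = Mp then uA (outcomeOf Mr)
        else if bChal Mr = Mr then uA (outcomeOf Mr) else uA C - F) :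
    ∀ Mp : SolMsg, (∀ Mr : SolMsg, Mr ≠ SolMsg.α → payA Mp Mr < payA Mp SolMsg.α) ∧
      (∀ Mr : SolMsg, payA Mp Mr ≤ payA Mp SolMsg.α) :=
  solomon_responder_reports_truth_general uA uB F hAC hCB hbB hbAC hCFB bChal hbBR payA hpayA
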